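/- Sklar's theorem (uniqueness part): if the marginals F_1,...,F_n of a joint distribution function F on ℝ^n are continuous, then there is at most one copula C with F(x_1,...,x_n) = C(F_1(x_1),...,F_n(x_n)) for all x; namely C is uniquely determined on [0,1]^n. -/

import Mathlib

open MeasureTheory Set Filter Topology

noncomputable def JointCDF {n : ℕ} (μ : Measure (Fin n → ℝ)) : (Fin n → ℝ) → ℝ :=
  fun x => (μ {y | ∀ i, y i ≤ x i}).toReal

def IsCopula {n : ℕ} (C : (Fin n → ℝ) → ℝ) : Prop :=
  ∃ μ : Measure (Fin n → ℝ), IsProbabilityMeasure μ ∧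
    (∀ i : Fin n, μ.map (fun y => y i) = volume.restrict (Set.Icc (0:ℝ) 1)) ∧
    (∀ u : Fin n → ℝ, (∀ i, u i ∈ Set.Icc (0:ℝ) 1) → C u = JointCDF μ u)

def IsCDF (F : ℝ → ℝ) : Prop :=
  Monotone F ∧ (∀ x, ContinuousWithinAt F (Set.Ici x) x) ∧
    Tendsto F atBot (nhds 0) ∧ Tendsto F atTop (nhds 1)

/-! Uniform marginals make a copula Lipschitz: moving the corner of the orthant
`{y | y ≤ u}` by `h` in one coordinate changes its mass by at most `h`. So two copulas are
continuous on the cube, and if they agree on the range of `x ↦ (F₁ x₁, …, Fₙ xₙ)` they agree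
on its closure, which contains the cube because each continuous `Fᵢ` tends to `0` and `1`
and hence has range dense in `[0,1]`. -/

section JointCDF

variable {n : ℕ} {μ : Measure (Fin n → ℝ)}

lemma measure_preimage_eval_Ioc_le_dist (hμ : ∀ i, μ.map (fun y => y i) ≤ volume)
    (u v : Fin n → ℝ) (i : Fin n) :
    μ ((fun y => y i) ⁻¹' Ioc (v i) (u i)) ≤ ENNReal.ofReal (dist u v) :=
  calc μ ((fun y => y i) ⁻¹' Ioc (v i) (u i))
      = μ.map (fun y => y i) (Ioc (v i) (u i)) :=
        (Measure.map_apply (measurable_pi_apply i) measurableSet_Ioc).symm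
    _ ≤ volume (Ioc (v i) (u i)) := hμ i _
    _ = ENNReal.ofReal (u i - v i) := Real.volume_Ioc
    _ ≤ ENNReal.ofReal (dist u v) :=
        ENNReal.ofReal_le_ofReal ((le_abs_self _).trans (dist_le_pi_dist u v i))

lemma jointCDF_le_add_mul_dist [IsFiniteMeasure μ] (hμ : ∀ i, μ.map (fun y => y i) ≤ volume)
    (u v : Fin n → ℝ) :
    JointCDF μ u ≤ JointCDF μ v + n * dist u v := by
  have hcover : {y : Fin n → ℝ | ∀ i, y i ≤ u i} ⊆
      {y | ∀ i, y i ≤ v i} ∪ ⋃ i, (fun y => y i) ⁻¹' Ioc (v i) (u i) := by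
    intro y hy
    by_cases hv : ∀ i, y i ≤ v i
    · exact Or.inl hv
    · obtain ⟨i, hi⟩ := not_forall.1 hv
      exact Or.inr (mem_iUnion.2 ⟨i, lt_of_not_ge hi, hy i⟩)
  have hstrips : μ (⋃ i, (fun y : Fin n → ℝ => y i) ⁻¹' Ioc (v i) (u i)) ≤
      ENNReal.ofReal (n * dist u v) :=
    calc _ ≤ ∑ i, μ ((fun y : Fin n → ℝ => y i) ⁻¹' Ioc (v i) (u i)) :=
          measure_iUnion_fintype_le _ _
      _ ≤ ∑ _i : Fin n, ENNReal.ofReal (dist u v) :=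
          Finset.sum_le_sum fun i _ => measure_preimage_eval_Ioc_le_dist hμ u v i
      _ = ENNReal.ofReal (n * dist u v) := by
          simp [ENNReal.ofReal_mul, ENNReal.ofReal_natCast]
  calc JointCDF μ u ≤ μ.real ({y | ∀ i, y i ≤ v i} ∪ ⋃ i, (fun y => y i) ⁻¹' Ioc (v i) (u i)) :=
        measureReal_mono hcover
    _ ≤ JointCDF μ v + μ.real (⋃ i, (fun y : Fin n → ℝ => y i) ⁻¹' Ioc (v i) (u i)) :=
        measureReal_union_le _ _
    _ ≤ JointCDF μ v + n * dist u v := by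
        gcongr
        exact ENNReal.toReal_le_of_le_ofReal (by positivity) hstrips

lemma lipschitzWith_jointCDF [IsFiniteMeasure μ] (hμ : ∀ i, μ.map (fun y => y i) ≤ volume) :
    LipschitzWith n (JointCDF μ) :=
  LipschitzWith.of_le_add_mul n fun u v => by
    simpa using jointCDF_le_add_mul_dist hμ u v

end JointCDF

lemma IsCopula.continuousOn {n : ℕ} {C : (Fin n → ℝ) → ℝ} (hC : IsCopula C) :
    ContinuousOn C (univ.pi fun _ => Icc 0 1) := by
  obtain ⟨μ, _, hmarg, hCμ⟩ := hC
  have hμ : ∀ i, μ.map (fun y => y i) ≤ volume := fun i => (hmarg i).le.trans Measure.restrict_le_self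
  refine (lipschitzWith_jointCDF hμ).continuous.continuousOn.congr fun u hu => ?_
  exact hCμ u fun i => hu i (mem_univ i)

lemma IsCDF.mem_Icc {F : ℝ → ℝ} (hF : IsCDF F) (x : ℝ) : F x ∈ Icc 0 1 := by
  obtain ⟨hmono, -, hbot, htop⟩ := hF
  exact ⟨le_of_tendsto hbot (eventually_atBot.2 ⟨x, fun _ hz => hmono hz⟩),
    ge_of_tendsto htop (eventually_atTop.2 ⟨x, fun _ hz => hmono hz⟩)⟩

lemma Icc_subset_closure_range_of_tendsto {α : Type*} [TopologicalSpace α] [PreconnectedSpace α]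
    {f : α → ℝ} (hf : Continuous f) {l₁ l₂ : Filter α} [l₁.NeBot] [l₂.NeBot] {a b : ℝ}
    (ha : Tendsto f l₁ (𝓝 a)) (hb : Tendsto f l₂ (𝓝 b)) :
    Icc a b ⊆ closure (range f) :=
  (isPreconnected_range hf).closure.Icc_subset
    (mem_closure_of_tendsto ha (.of_forall mem_range_self))
    (mem_closure_of_tendsto hb (.of_forall mem_range_self))

/-- **Sklar's theorem, uniqueness part.** If the marginals `F i` are
continuous CDFs, then there is at most one copula `C` with
`F x = C (F 1 x1, …, F n xn)` for all `x`: any two copulas `C₁, C₂` compatible with the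
same joint distribution function agree on the whole cube `[0,1]^n`. -/
theorem sklar_uniqueness {n : ℕ} (F : (Fin n → ℝ) → ℝ) (Fm : Fin n → ℝ → ℝ)
    (hFm : ∀ i, IsCDF (Fm i)) (hFmcont : ∀ i, Continuous (Fm i))
    (C₁ C₂ : (Fin n → ℝ) → ℝ) (hC₁ : IsCopula C₁) (hC₂ : IsCopula C₂)
    (h₁ : ∀ x : Fin n → ℝ, F x = C₁ (fun i => Fm i (x i)))
    (h₂ : ∀ x : Fin n → ℝ, F x = C₂ (fun i => Fm i (x i))) :
    ∀ u : Fin n → ℝ, (∀ i, u i ∈ Set.Icc (0:ℝ) 1) → C₁ u = C₂ u := by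
  have hrange : range (Pi.map Fm) = univ.pi fun i => range (Fm i) := range_piMap Fm
  have heq : EqOn C₁ C₂ (range (Pi.map Fm)) := by
    rintro _ ⟨x, rfl⟩
    exact (h₁ x).symm.trans (h₂ x)
  have hsub : range (Pi.map Fm) ⊆ univ.pi fun _ => Icc 0 1 := by
    rw [hrange]
    exact pi_mono fun i _ => range_subset_iff.2 (hFm i).mem_Icc
  have hdense : (univ.pi fun _ => Icc 0 1) ⊆ closure (range (Pi.map Fm)) := by
    rw [hrange, closure_pi_set]
    exact pi_mono fun i _ =>
      Icc_subset_closure_range_of_tendsto (hFmcont i) (hFm i).2.2.1 (hFm i).2.2.2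
  intro u hu
  exact heq.of_subset_closure hC₁.continuousOn hC₂.continuousOn hsub hdense (fun i _ => hu i)
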